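/- (Candidate sets suffice for optimal RS-repairs.) Let R be a relation, Δ a finite set of FDs, ρ a representation constraint, and C a candidate set for (R, Δ). For a relation S, let m(S, ρ) denote the maximum cardinality of a subset of S satisfying ρ. Then max_{R' ∈ C} m(R', ρ) equals the maximum cardinality of an RS-repair of R w.r.t. Δ and ρ. In particular, taking for each R' ∈ C a maximum-size ρ-satisfying subset and returning the largest of these yields an optimal (maximum-size) RS-repair of R. -/

import Mathlib

/-- The number of tuples in the relation `R` whose sensitive attribute `s` has value `v`. -/
def countVal {ι V : Type*} [DecidableEq V] (s : ι) (R : Finset (ι → V)) (v : V) : ℕ :=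
  (R.filter fun t => t s = v).card

/-- `R` satisfies the representation constraint `ρ` on the sensitive attribute `s`. -/
def satRC {ι V : Type*} [DecidableEq V] (s : ι) (ρ : V →₀ ℚ) (R : Finset (ι → V)) : Prop :=
  ∀ v : V, ρ v * (R.card : ℚ) ≤ (countVal s R v : ℚ)

/-- `R` satisfies the functional dependency `f = (X, A)`. -/
def satFD {ι V : Type*} (R : Finset (ι → V)) (f : Finset ι × ι) : Prop :=
  ∀ t₁ ∈ R, ∀ t₂ ∈ R, (∀ a ∈ f.1, t₁ a = t₂ a) → t₁ f.2 = t₂ f.2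

/-- `R` satisfies the finite set `Δ` of functional dependencies. -/
def satFDs {ι V : Type*} (Δ : Finset (Finset ι × ι)) (R : Finset (ι → V)) : Prop :=
  ∀ f ∈ Δ, satFD R f

/-- `R₁` is representatively equivalent to `R₂`. -/
def reprEquiv {ι V : Type*} [DecidableEq V] (s : ι) (R₁ R₂ : Finset (ι → V)) : Prop :=
  ∀ v : V, countVal s R₁ v = countVal s R₂ v

/-- `R₁` representatively dominates `R₂`. -/
def reprDom {ι V : Type*} [DecidableEq V] (s : ι) (R₁ R₂ : Finset (ι → V)) : Prop :=
  (∀ v : V, countVal s R₂ v ≤ countVal s R₁ v) ∧ ∃ v : V, countVal s R₂ v < countVal s R₁ v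

/-- `C` is a candidate set for `(R, Δ)`: a set of S-repairs of `R` w.r.t. `Δ` such that
no two distinct members are representatively equivalent, no member representatively
dominates another, and every S-repair of `R` w.r.t. `Δ` is representatively equivalent
to, or representatively dominated by, some member of `C`. -/
def IsCandidateSet {ι V : Type*} [DecidableEq V] (s : ι) (R : Finset (ι → V))
    (Δ : Finset (Finset ι × ι)) (C : Set (Finset (ι → V))) : Prop :=
  (∀ R' ∈ C, R' ⊆ R ∧ satFDs Δ R') ∧
  (∀ R₁ ∈ C, ∀ R₂ ∈ C, R₁ ≠ R₂ → ¬ reprEquiv s R₁ R₂ ∧ ¬ reprDom s R₁ R₂) ∧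
  (∀ R'' ⊆ R, satFDs Δ R'' → ∃ R' ∈ C, reprEquiv s R' R'' ∨ reprDom s R' R'')

/-- The maximum cardinality of a subset of `S` satisfying the representation
constraint `ρ` (written `m(S, ρ)` in the paper). -/
noncomputable def maxSat {ι V : Type*} [DecidableEq V] (s : ι) (ρ : V →₀ ℚ)
    (S : Finset (ι → V)) : ℕ :=
  sSup {n : ℕ | ∃ S' ⊆ S, satRC s ρ S' ∧ S'.card = n}

/-!
Every RS-repair `R''` is representatively equivalent to or dominated by some candidate `R'`,
so `R'` has, for each value `v`, at least as many tuples with sensitive value `v` as `R''`.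
Picking exactly `count_{R''}(v)` of them for every `v` gives a subset of `R'` with the same
value counts, hence the same size, as `R''`; it satisfies `ρ` because `ρ` only sees these
counts. Conversely, a `ρ`-satisfying subset of a candidate is an RS-repair, since FDs are
inherited by subsets.
-/

lemma satFDs.mono {ι V : Type*} {Δ : Finset (Finset ι × ι)} {S T : Finset (ι → V)}
    (hST : S ⊆ T) (hT : satFDs Δ T) : satFDs Δ S :=
  fun f hf t₁ ht₁ t₂ ht₂ => hT f hf t₁ (hST ht₁) t₂ (hST ht₂)

section Counts

variable {ι V : Type*} [DecidableEq V] (s : ι)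

lemma countVal_le_of_reprEquiv_or_reprDom {R₁ R₂ : Finset (ι → V)}
    (h : reprEquiv s R₁ R₂ ∨ reprDom s R₁ R₂) (v : V) :
    countVal s R₂ v ≤ countVal s R₁ v := by
  rcases h with heq | hdom
  · exact (heq v).ge
  · exact hdom.1 v

lemma card_eq_of_countVal_eq {S T : Finset (ι → V)}
    (h : ∀ v, countVal s S v = countVal s T v) : S.card = T.card := by
  classical
  let vals := (S ∪ T).image (fun t => t s)
  have hS : (S : Set (ι → V)).MapsTo (fun t => t s) vals :=
    fun t ht => Finset.mem_image_of_mem _ (Finset.mem_union_left _ ht)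
  have hT : (T : Set (ι → V)).MapsTo (fun t => t s) vals :=
    fun t ht => Finset.mem_image_of_mem _ (Finset.mem_union_right _ ht)
  rw [Finset.card_eq_sum_card_fiberwise hS, Finset.card_eq_sum_card_fiberwise hT]
  exact Finset.sum_congr rfl fun v _ => h v

lemma satRC_of_countVal_eq {ρ : V →₀ ℚ} {S T : Finset (ι → V)}
    (h : ∀ v, countVal s S v = countVal s T v) (hT : satRC s ρ T) : satRC s ρ S := by
  intro v
  rw [h v, card_eq_of_countVal_eq s h]
  exact hT v

lemma exists_subset_countVal_eq {S T : Finset (ι → V)}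
    (h : ∀ v, countVal s T v ≤ countVal s S v) :
    ∃ S' ⊆ S, ∀ v, countVal s S' v = countVal s T v := by
  classical
  choose pick hpick_sub hpick_card using fun v => Finset.exists_subset_card_eq (h v)
  refine ⟨S.filter fun t => t ∈ pick (t s), Finset.filter_subset _ _, fun v => ?_⟩
  have hfiber : (S.filter fun t => t ∈ pick (t s)).filter (fun t => t s = v) = pick v := by
    ext t
    simp only [Finset.mem_filter]
    constructor
    · rintro ⟨⟨-, ht⟩, rfl⟩
      exact ht
    · intro ht
      obtain ⟨htS, rfl⟩ := Finset.mem_filter.1 (hpick_sub _ ht)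
      exact ⟨⟨htS, ht⟩, rfl⟩
  rw [countVal, hfiber, hpick_card]

end Counts

section MaxSat

variable {ι V : Type*} [DecidableEq V] (s : ι) (ρ : V →₀ ℚ)

lemma satRC_empty : satRC s ρ (∅ : Finset (ι → V)) := by
  intro v
  simp [countVal]

lemma bddAbove_satRC_card (S : Finset (ι → V)) :
    BddAbove {n : ℕ | ∃ S' ⊆ S, satRC s ρ S' ∧ S'.card = n} := by
  refine ⟨S.card, ?_⟩
  rintro n ⟨S', hS', -, rfl⟩
  exact Finset.card_le_card hS'

lemma exists_satRC_card_eq_maxSat (S : Finset (ι → V)) :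
    ∃ S' ⊆ S, satRC s ρ S' ∧ S'.card = maxSat s ρ S :=
  Nat.sSup_mem (s := {n : ℕ | ∃ S' ⊆ S, satRC s ρ S' ∧ S'.card = n})
    ⟨0, ∅, Finset.empty_subset S, satRC_empty s ρ, Finset.card_empty⟩
    (bddAbove_satRC_card s ρ S)

lemma card_le_maxSat {S S' : Finset (ι → V)} (hS' : S' ⊆ S) (hρ : satRC s ρ S') :
    S'.card ≤ maxSat s ρ S :=
  le_csSup (bddAbove_satRC_card s ρ S) ⟨S', hS', hρ, rfl⟩

lemma card_le_maxSat_of_countVal_le {S T : Finset (ι → V)} (hT : satRC s ρ T)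
    (h : ∀ v, countVal s T v ≤ countVal s S v) : T.card ≤ maxSat s ρ S := by
  obtain ⟨S', hS', hcount⟩ := exists_subset_countVal_eq s h
  rw [← card_eq_of_countVal_eq s hcount]
  exact card_le_maxSat s ρ hS' (satRC_of_countVal_eq s hcount hT)

end MaxSat

theorem candidate_set_suffices_general {ι V : Type*} [DecidableEq V]
    (s : ι) (R : Finset (ι → V)) (Δ : Finset (Finset ι × ι))
    (ρ : V →₀ ℚ)
    (C : Set (Finset (ι → V))) (hC : IsCandidateSet s R Δ C) :
    sSup {n : ℕ | ∃ R' ∈ C, maxSat s ρ R' = n} =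
      sSup {n : ℕ | ∃ R' ⊆ R, satFDs Δ R' ∧ satRC s ρ R' ∧ R'.card = n} := by
  obtain ⟨hrepair, -, hcover⟩ := hC
  apply csSup_eq_csSup_of_forall_exists_le
  · rintro _ ⟨R', hR', rfl⟩
    obtain ⟨S, hSR', hρ, hcard⟩ := exists_satRC_card_eq_maxSat s ρ R'
    exact ⟨S.card, ⟨S, hSR'.trans (hrepair R' hR').1, (hrepair R' hR').2.mono hSR', hρ, rfl⟩,
      hcard.ge⟩
  · rintro _ ⟨R'', hR'', hΔ, hρ, rfl⟩
    obtain ⟨R', hR', hcmp⟩ := hcover R'' hR'' hΔ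
    exact ⟨maxSat s ρ R', ⟨R', hR', rfl⟩,
      card_le_maxSat_of_countVal_le s ρ hρ (countVal_le_of_reprEquiv_or_reprDom s hcmp)⟩

/-- Candidate sets suffice for computing optimal RS-repairs: the maximum over the
candidates `R' ∈ C` of the maximum size `m(R', ρ)` of a `ρ`-satisfying subset of `R'`
equals the maximum cardinality of an RS-repair of `R` w.r.t. `Δ` and `ρ`. -/
theorem candidate_set_suffices {ι V : Type*} [DecidableEq V]
    (s : ι) (R : Finset (ι → V)) (Δ : Finset (Finset ι × ι))
    (hleg : ∀ f ∈ Δ, f.2 ∉ f.1)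
    (ρ : V →₀ ℚ) (h0 : ∀ v, 0 ≤ ρ v) (h1 : ∀ v, ρ v ≤ 1)
    (hsum : ∑ v ∈ ρ.support, ρ v ≤ 1)
    (C : Set (Finset (ι → V))) (hC : IsCandidateSet s R Δ C) :
    sSup {n : ℕ | ∃ R' ∈ C, maxSat s ρ R' = n} =
      sSup {n : ℕ | ∃ R' ⊆ R, satFDs Δ R' ∧ satRC s ρ R' ∧ R'.card = n} :=
  candidate_set_suffices_general s R Δ ρ C hC
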